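/- arXiv:math/0702841 — 3 statements merged into one kernel-verified Lean document; each statement's English description precedes it below -/
import Mathlib

section
/- Setting a lower limit L with T − L = k(U−T), the unilateral index C_pu(u,v) equals the asymmetric-tolerance index C_p''(u, 4v/(1+k)²): with d = (U−L)/2 = (1+k)(U−T)/2, d* = min(U−T, T−L) = U−T, A* = max(d*(μ−T)/(U−T), d*(T−μ)/(T−L)) = max(μ−T,(T−μ)/k), and A = dA*/d*, one has (U−T − u·A*)/(3·sqrt(σ² + v·A*²)) = (d* − u·A*)/(3·sqrt(σ² + (4v/(1+k)²)·A²)). -/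
theorem stmt_15 (U T μ σ u v k : ℝ) (hσ : σ > 0) (hUT : U > T) (hk : k > 1)
    (hu : u ≥ 0) (hv : v ≥ 0) (L : ℝ) (hL : L = T - k * (U - T)) :
    let d := (U - L) / 2
    let dstar := min (U - T) (T - L)
    let Astar := max (dstar * (μ - T) / (U - T)) (dstar * (T - μ) / (T - L))
    let A := d * Astar / dstar
    (U - T - u * max (μ - T) ((T - μ) / k)) /
        (3 * Real.sqrt (σ ^ 2 + v * (max (μ - T) ((T - μ) / k)) ^ 2)) =
      (dstar - u * Astar) /
        (3 * Real.sqrt (σ ^ 2 + (4 * v / (1 + k) ^ 2) * A ^ 2)) := by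
  intro d dstar Astar A
  have hUT' : U - T > 0 := by linarith
  have hk0 : k > 0 := by linarith
  have hTL : T - L = k * (U - T) := by rw [hL]; ring
  have hds : dstar = U - T := by
    have : U - T ≤ T - L := by
      rw [hTL]; nlinarith
    simp [dstar, min_eq_left this]
  have hA1 : Astar = max (μ - T) ((T - μ) / k) := by
    unfold Astar
    rw [hds, hTL]
    congr 1
    · field_simp
    · rw [div_eq_div_iff (by positivity) (by positivity)]
      ring
  have hAeq : A = (1 + k) / 2 * Astar := by
    unfold A d
    rw [hds, hL]
    field_simp
    ring
  have hterm : 4 * v / (1 + k) ^ 2 * A ^ 2 = v * Astar ^ 2 := by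
    rw [hAeq]
    have h1k : (1 + k) ≠ 0 := by positivity
    field_simp
    ring
  rw [hterm, hds, hA1]
end

section
/- Let Z ~ N(δ, 1) and Y = (max(Z, −Z/k))². Then for y > 0 the density of Y is f_Y(y) = (1/(2√y))·(φ(√y − δ) + k·φ(k√y + δ)), where φ is the standard normal density. -/
open MeasureTheory ProbabilityTheory Set Real
open scoped ENNReal

/-!
On `z > 0` the map is `z ↦ z ^ 2` and on `z < 0` it is `z ↦ (z / k) ^ 2`, so off the null set
`{0}` it is `z ↦ (z / c) ^ 2` with `c = 1` on one half-line and `c = -k` on the other. The inverse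
branches `y ↦ c * √y` have Jacobian `|c| / (2 * √y)`, so the one-dimensional change of variables
turns the density `p` of `Z` into `1 / (2 * √y) * p √y + k / (2 * √y) * p (-k * √y)`; for the
Gaussian, `φ (-k * √y - δ) = φ (k * √y + δ)` by symmetry.
-/

lemma lintegral_image_const_mul_sqrt (p : ℝ → ℝ≥0∞) {c : ℝ} (hc : c ≠ 0) {A : Set ℝ}
    (hA : MeasurableSet A) :
    ∫⁻ z in ({z | 0 < z / c ∧ (z / c) ^ 2 ∈ A} : Set ℝ), p z
      = ∫⁻ y in A ∩ Ioi 0, ENNReal.ofReal (|c| / (2 * √y)) * p (c * √y) := by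
  have himage :
      (fun y => c * √y) '' (A ∩ Ioi 0) = ({z | 0 < z / c ∧ (z / c) ^ 2 ∈ A} : Set ℝ) := by
    ext z
    constructor
    · rintro ⟨y, ⟨hyA, hy0⟩, rfl⟩
      rw [mem_ofPred_eq, mul_div_cancel_left₀ _ hc, sq_sqrt hy0.le]
      exact ⟨sqrt_pos.2 hy0, hyA⟩
    · rintro ⟨hz0, hzA⟩
      refine ⟨(z / c) ^ 2, ⟨hzA, pow_pos hz0 2⟩, ?_⟩
      simp only [sqrt_sq hz0.le]
      field_simp
  have hderiv : ∀ y ∈ A ∩ Ioi 0, HasDerivWithinAt (fun y => c * √y) (c * (1 / (2 * √y)))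
      (A ∩ Ioi 0) y := fun y hy =>
    ((hasDerivAt_sqrt hy.2.ne').const_mul c).hasDerivWithinAt
  have hinj : InjOn (fun y => c * √y) (A ∩ Ioi 0) := fun a ha b hb hab =>
    (sqrt_inj ha.2.le hb.2.le).1 (mul_left_cancel₀ hc hab)
  rw [← himage, lintegral_image_eq_lintegral_abs_deriv_mul (hA.inter measurableSet_Ioi)
    hderiv hinj]
  refine setLIntegral_congr_fun (hA.inter measurableSet_Ioi) fun y hy => ?_
  rw [abs_mul, abs_of_pos (by have : 0 < y := hy.2; positivity : 0 < 1 / (2 * √y)), mul_one_div]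

lemma measurable_sq_max_neg_div (k : ℝ) : Measurable fun z : ℝ => (max z (-z / k)) ^ 2 := by
  fun_prop

-- The branch `z > 0` is written with `z / 1` so that both branches match
-- `lintegral_image_const_mul_sqrt`.
lemma preimage_sq_max_neg_div_ae_eq {k : ℝ} (hk : 0 < k) (A : Set ℝ) :
    (fun z : ℝ => (max z (-z / k)) ^ 2) ⁻¹' A =ᵐ[volume]
      ({z | 0 < z / 1 ∧ (z / 1) ^ 2 ∈ A} ∪ {z | 0 < z / -k ∧ (z / -k) ^ 2 ∈ A} : Set ℝ) := by
  refine Filter.eventuallyEq_set.2 ?_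
  filter_upwards [volume.ae_ne 0] with z hz
  rw [mem_preimage, mem_union, mem_ofPred_eq, mem_ofPred_eq]
  rcases hz.lt_or_gt with hneg | hpos
  · have hz' : 0 < z / -k := div_pos_of_neg_of_neg hneg (neg_neg_of_pos hk)
    rw [div_neg, ← neg_div, max_eq_right (by rw [le_div_iff₀ hk]; nlinarith), neg_div, ← div_neg]
    simp [hz', not_lt.2 hneg.le]
  · have hz' : z / -k < 0 := div_neg_of_pos_of_neg hpos (neg_neg_of_pos hk)
    rw [max_eq_left (by rw [div_le_iff₀ hk]; nlinarith)]
    simp [hpos, not_lt.2 hz'.le]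

theorem map_sq_max_neg_div_withDensity {k : ℝ} (hk : 0 < k) {p : ℝ → ℝ≥0∞}
    (hp : Measurable p) :
    (volume.withDensity p).map (fun z => (max z (-z / k)) ^ 2) =
      volume.withDensity ((Ioi 0).indicator fun y =>
        ENNReal.ofReal (1 / (2 * √y)) * p √y + ENNReal.ofReal (k / (2 * √y)) * p (-k * √y)) := by
  ext A hA
  have hdisj : Disjoint ({z | 0 < z / 1 ∧ (z / 1) ^ 2 ∈ A} : Set ℝ)
      {z | 0 < z / -k ∧ (z / -k) ^ 2 ∈ A} := by
    refine disjoint_left.2 fun z hpos hneg => ?_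
    have : z / -k < 0 := div_neg_of_pos_of_neg (by simpa using hpos.1) (neg_neg_of_pos hk)
    exact hneg.1.not_gt this
  have hmeas : MeasurableSet ({z | 0 < z / -k ∧ (z / -k) ^ 2 ∈ A} : Set ℝ) :=
    (measurableSet_lt measurable_const (measurable_id.div_const _)).inter
      (hA.preimage ((measurable_id.div_const _).pow_const 2))
  rw [Measure.map_apply (measurable_sq_max_neg_div k) hA,
    withDensity_apply _ (measurable_sq_max_neg_div k hA), withDensity_apply _ hA,
    setLIntegral_congr (preimage_sq_max_neg_div_ae_eq hk A), lintegral_union hmeas hdisj,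
    lintegral_image_const_mul_sqrt p one_ne_zero hA,
    lintegral_image_const_mul_sqrt p (neg_ne_zero.2 hk.ne') hA,
    ← lintegral_add_left (by fun_prop), setLIntegral_indicator measurableSet_Ioi, inter_comm]
  simp [abs_of_pos hk]

lemma gaussianPDF_one (μ x : ℝ) :
    gaussianPDF μ 1 x = ENNReal.ofReal (exp (-(x - μ) ^ 2 / 2) / √(2 * π)) := by
  simp [gaussianPDF, gaussianPDFReal, div_eq_inv_mul]

theorem stmt_18_general (δ k : ℝ) (hk : k > 1)
    {Ω : Type*} [MeasureSpace Ω] (P : Measure Ω)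
    (Z : Ω → ℝ) (hZ : Measure.map Z P = gaussianReal δ 1) :
    Measure.map (fun ω => (max (Z ω) (-(Z ω) / k)) ^ 2) P =
      volume.withDensity (fun y => ENNReal.ofReal
        (if 0 < y then
          (1 / (2 * Real.sqrt y)) *
            ((Real.exp (-(Real.sqrt y - δ) ^ 2 / 2) / Real.sqrt (2 * Real.pi)) +
              k * (Real.exp (-(k * Real.sqrt y + δ) ^ 2 / 2) / Real.sqrt (2 * Real.pi)))
         else 0)) := by
  have hk0 : 0 < k := by linarith
  have hZm : AEMeasurable Z P := aemeasurable_of_map_neZero (by rw [hZ]; infer_instance)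
  change Measure.map ((fun z => (max z (-z / k)) ^ 2) ∘ Z) P = _
  rw [← AEMeasurable.map_map_of_aemeasurable (measurable_sq_max_neg_div k).aemeasurable hZm, hZ,
    gaussianReal_of_var_ne_zero δ one_ne_zero,
    map_sq_max_neg_div_withDensity hk0 (measurable_gaussianPDF δ 1)]
  congr 1 with y
  rcases lt_or_ge 0 y with hy | hy
  · have hφ : -(-k * √y - δ) ^ 2 = -(k * √y + δ) ^ 2 := by ring
    rw [indicator_of_mem (mem_Ioi.2 hy), if_pos hy, gaussianPDF_one, gaussianPDF_one, hφ,
      ← ENNReal.ofReal_mul (by positivity), ← ENNReal.ofReal_mul (by positivity),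
      ← ENNReal.ofReal_add (by positivity) (by positivity)]
    congr 1
    ring
  · rw [indicator_of_notMem (notMem_Ioi.2 hy), if_neg hy.not_gt, ENNReal.ofReal_zero]

theorem stmt_18 (δ k : ℝ) (hk : k > 1)
    {Ω : Type*} [MeasureSpace Ω] (P : Measure Ω) [IsProbabilityMeasure P]
    (Z : Ω → ℝ) (hZ : Measure.map Z P = gaussianReal δ 1) :
    Measure.map (fun ω => (max (Z ω) (-(Z ω) / k)) ^ 2) P =
      volume.withDensity (fun y => ENNReal.ofReal
        (if 0 < y then
          (1 / (2 * Real.sqrt y)) *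
            ((Real.exp (-(Real.sqrt y - δ) ^ 2 / 2) / Real.sqrt (2 * Real.pi)) +
              k * (Real.exp (-(k * Real.sqrt y + δ) ^ 2 / 2) / Real.sqrt (2 * Real.pi)))
         else 0)) :=
  stmt_18_general δ k hk P Z hZ
end

section
/- For Z ~ N(δ,1) and A = max(Z, −Z/k), the expectation satisfies E[A] = δ + (1 + 1/k)·(φ(δ) − δ·Φ(−δ)) for δ ≥ 0 — equivalently E[max(Z,−Z/k)] = δ·Φ(δ) − δ·Φ(−δ)/k + (1+1/k)·φ(δ), which yields the unbiasedness-correction term (1+k^{−1})(φ(|δ|) − |δ|Φ(−|δ|)) appearing in E[\hat{C}_{pku,n}]. -/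
open MeasureTheory ProbabilityTheory

noncomputable def stdNormalPdf (x : ℝ) : ℝ := Real.exp (-x ^ 2 / 2) / Real.sqrt (2 * Real.pi)

noncomputable def stdNormalCdf (x : ℝ) : ℝ := ∫ t in Set.Iic x, stdNormalPdf t

/-!
For `k > 0` we have `max x (-x / k) = x + (1 + 1 / k) * max (-x) 0`, so
`E[max(Z, -Z/k)] = δ + (1 + 1/k) E[(-Z)⁺]`. Writing `Z = δ + W` with `W` standard normal,
`E[(-Z)⁺] = ∫_{w ≤ -δ} (-w - δ) φ(w) dw = φ(δ) - δ Φ(-δ)`, because `-w φ(w) = φ'(w)`.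
The stated form follows from `Φ(δ) + Φ(-δ) = 1`.
-/

open Real Set Filter Topology

lemma stdNormalPdf_neg (x : ℝ) : stdNormalPdf (-x) = stdNormalPdf x := by
  simp [stdNormalPdf]

lemma gaussianPDFReal_one (μ x : ℝ) : gaussianPDFReal μ 1 x = stdNormalPdf (x - μ) := by
  simp [gaussianPDFReal, stdNormalPdf, div_eq_inv_mul]

lemma gaussianPDFReal_zero_one : gaussianPDFReal 0 1 = stdNormalPdf := by
  ext x
  simp [gaussianPDFReal_one]

lemma integral_gaussianReal_one_eq_integral_stdNormalPdf_mul (μ : ℝ) (f : ℝ → ℝ) :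
    ∫ x, f x ∂gaussianReal μ 1 = ∫ t, stdNormalPdf t * f (t + μ) := by
  rw [integral_gaussianReal_eq_integral_smul one_ne_zero,
    ← integral_add_right_eq_self _ μ]
  simp [gaussianPDFReal_one]

lemma integral_stdNormalPdf : ∫ x, stdNormalPdf x = 1 := by
  simpa [gaussianPDFReal_zero_one] using integral_gaussianPDFReal_eq_one 0 one_ne_zero

lemma integrable_stdNormalPdf : Integrable stdNormalPdf :=
  gaussianPDFReal_zero_one ▸ integrable_gaussianPDFReal 0 1

lemma stdNormalCdf_add_stdNormalCdf_neg (a : ℝ) : stdNormalCdf a + stdNormalCdf (-a) = 1 := by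
  have h_neg : stdNormalCdf (-a) = ∫ t in Ioi a, stdNormalPdf t := by
    simp [stdNormalCdf, ← integral_comp_neg_Ioi, stdNormalPdf_neg]
  rw [h_neg, stdNormalCdf, intervalIntegral.integral_Iic_add_Ioi
    integrable_stdNormalPdf.integrableOn integrable_stdNormalPdf.integrableOn,
    integral_stdNormalPdf]

lemma hasDerivAt_stdNormalPdf (x : ℝ) :
    HasDerivAt stdNormalPdf (-x * stdNormalPdf x) x := by
  have h_exponent : HasDerivAt (fun x : ℝ => -x ^ 2 / 2) (-x) x :=
    ((hasDerivAt_pow 2 x).neg.div_const 2).congr_deriv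
      (by simp only [Nat.cast_ofNat, Nat.add_one_sub_one, pow_one]; ring)
  exact (h_exponent.exp.div_const (√(2 * π))).congr_deriv (by simp only [stdNormalPdf]; ring)

lemma tendsto_stdNormalPdf_atBot : Tendsto stdNormalPdf atBot (𝓝 0) := by
  have h_sq : Tendsto (fun x : ℝ => x ^ 2) atBot atTop := by
    simpa [Function.comp_def] using
      (tendsto_pow_atTop (α := ℝ) two_ne_zero).comp tendsto_neg_atBot_atTop
  have h : Tendsto (fun x : ℝ => -x ^ 2 / 2) atBot atBot :=
    (tendsto_neg_atTop_atBot.comp h_sq).atBot_div_const two_pos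
  have := (tendsto_exp_comp_nhds_zero.mpr h).div_const (√(2 * π))
  rwa [zero_div] at this

lemma integrable_neg_mul_stdNormalPdf : Integrable fun x => -x * stdNormalPdf x := by
  refine ((integrable_mul_exp_neg_mul_sq (b := 1 / 2) one_half_pos).neg.div_const
    (√(2 * π))).congr (.of_forall fun x => ?_)
  simp only [stdNormalPdf, Pi.neg_apply]
  ring_nf

lemma integral_Iic_neg_mul_stdNormalPdf (a : ℝ) :
    ∫ x in Iic a, -x * stdNormalPdf x = stdNormalPdf a := by
  simpa using integral_Iic_of_hasDerivAt_of_tendsto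
    (hasDerivAt_stdNormalPdf a).continuousAt.continuousWithinAt
    (fun x _ => hasDerivAt_stdNormalPdf x) integrable_neg_mul_stdNormalPdf.integrableOn
    tendsto_stdNormalPdf_atBot

lemma integral_negPart_gaussianReal (μ : ℝ) :
    ∫ x, max (-x) 0 ∂gaussianReal μ 1 = stdNormalPdf μ - μ * stdNormalCdf (-μ) := by
  have h_ind : (fun t => stdNormalPdf t * max (-(t + μ)) 0) =
      (Iic (-μ)).indicator fun t => -t * stdNormalPdf t - μ * stdNormalPdf t := by
    ext t
    rcases le_or_gt t (-μ) with ht | ht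
    · rw [indicator_of_mem (mem_Iic.mpr ht), max_eq_left (by linarith)]
      ring
    · rw [indicator_of_notMem (notMem_Iic.mpr ht), max_eq_right (by linarith), mul_zero]
  rw [integral_gaussianReal_one_eq_integral_stdNormalPdf_mul, h_ind,
    integral_indicator measurableSet_Iic,
    integral_sub integrable_neg_mul_stdNormalPdf.integrableOn
      (integrable_stdNormalPdf.const_mul μ).integrableOn,
    integral_Iic_neg_mul_stdNormalPdf, integral_const_mul, stdNormalPdf_neg, stdNormalCdf]

lemma max_neg_div_eq_add_mul_negPart {k : ℝ} (hk : 0 < k) (x : ℝ) :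
    max x (-x / k) = x + (1 + 1 / k) * max (-x) 0 := by
  rcases le_total 0 x with hx | hx
  · rw [max_eq_left (by rw [div_le_iff₀ hk]; nlinarith), max_eq_right (by linarith)]
    ring
  · rw [max_eq_right (by rw [le_div_iff₀ hk]; nlinarith), max_eq_left (by linarith)]
    field_simp
    ring

lemma integral_max_neg_div_gaussianReal (μ : ℝ) {k : ℝ} (hk : 0 < k) :
    ∫ x, max x (-x / k) ∂gaussianReal μ 1 =
      μ + (1 + 1 / k) * (stdNormalPdf μ - μ * stdNormalCdf (-μ)) := by
  have h_id : Integrable (fun x => x) (gaussianReal μ 1) :=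
    (memLp_id_gaussianReal 1).integrable le_rfl
  simp_rw [max_neg_div_eq_add_mul_negPart hk]
  rw [integral_add h_id (h_id.neg_part.const_mul _), integral_const_mul,
    integral_negPart_gaussianReal]
  simp [integral_id_gaussianReal]

theorem stmt_19_general (δ k : ℝ) (hk : k > 1)
    {Ω : Type*} [MeasureSpace Ω] (P : Measure Ω)
    (Z : Ω → ℝ) (hZ : Measure.map Z P = gaussianReal δ 1) :
    ∫ ω, max (Z ω) (-(Z ω) / k) ∂P =
      δ * stdNormalCdf δ - (δ / k) * stdNormalCdf (-δ) + (1 + 1 / k) * stdNormalPdf δ := by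
  have hk_pos : 0 < k := zero_lt_one.trans hk
  have hZ_meas : AEMeasurable Z P := aemeasurable_of_map_neZero (by rw [hZ]; infer_instance)
  have h_cont : Continuous fun x : ℝ => max x (-x / k) := by fun_prop
  rw [← integral_map hZ_meas h_cont.aestronglyMeasurable, hZ,
    integral_max_neg_div_gaussianReal δ hk_pos]
  have h_sym := stdNormalCdf_add_stdNormalCdf_neg δ
  field_simp
  linear_combination (-(δ * k)) * h_sym

theorem stmt_19 (δ k : ℝ) (hk : k > 1)
    {Ω : Type*} [MeasureSpace Ω] (P : Measure Ω) [IsProbabilityMeasure P]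
    (Z : Ω → ℝ) (hZ : Measure.map Z P = gaussianReal δ 1) :
    ∫ ω, max (Z ω) (-(Z ω) / k) ∂P =
      δ * stdNormalCdf δ - (δ / k) * stdNormalCdf (-δ) + (1 + 1 / k) * stdNormalPdf δ :=
  stmt_19_general δ k hk P Z hZ
end
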